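/- arXiv:1912.01698 — 3 statements merged into one kernel-verified Lean document; each statement's English description precedes it below -/
import Mathlib

section
/- Let f₁, …, f_T be L-Lipschitz (in each block variable) functions, and for each t let (u*_{t+1}, v*_{t+1}) be a saddle point of J_t = (1/t)Σ_{i=1}^t f_i, i.e., J_t(u*_{t+1}, y) ≤ J_t(u*_{t+1}, v*_{t+1}) ≤ J_t(x, v*_{t+1}) for all x, y. Then for any sequence of points (x_{t+1}, y_{t+1}), |Σ_{t=1}^T f_t(x_{t+1}, y_{t+1}) − Σ_{t=1}^T f_t(u*_{T+1}, v*_{T+1})| ≤ L·Σ_{t=1}^T (‖u*_t − u*_{t+1}‖ + ‖v*_t − v*_{t+1}‖ + ‖v*_{t+1} − y_{t+1}‖ + ‖u*_{t+1} − x_{t+1}‖). -/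
/-!
Write `F_t = ∑_{i ≤ t} f_i`. Comparing the cumulative value at the saddle point of `F_{n+1}`
with the one at the saddle point of `F_n` costs one Lipschitz step of the new loss `f_{n+1}`:
the leader `u_{n+2}` is a valid competitor in the minimisation defining `u_{n+1}`, and `v_{n+1}` one
in the maximisation defining `v_{n+2}`. Telescoping gives the upper bound with the drifts of `v`;
the lower bound is the same statement for the game `(y, x) ↦ -f_t(x, y)`, whose saddle points are
`(v_{t+1}, u_{t+1})`. The played points enter only through Lipschitz continuity in each block.
-/

open Finset

section BeTheLeader

variable {α β : Type*}

theorem sum_saddle_le_sum_leader_add_drift [SeminormedAddCommGroup β] (N : ℕ)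
    (f : ℕ → α → β → ℝ) (L : ℝ) (u : ℕ → α) (v : ℕ → β)
    (hLip : ∀ t, 1 ≤ t → t ≤ N → ∀ x y₁ y₂, |f t x y₁ - f t x y₂| ≤ L * ‖y₁ - y₂‖)
    (hmax : ∀ t, 1 ≤ t → t ≤ N → ∀ y,
      ∑ i ∈ Icc 1 t, f i (u (t+1)) y ≤ ∑ i ∈ Icc 1 t, f i (u (t+1)) (v (t+1)))
    (hmin : ∀ t, 1 ≤ t → t ≤ N → ∀ x,
      ∑ i ∈ Icc 1 t, f i (u (t+1)) (v (t+1)) ≤ ∑ i ∈ Icc 1 t, f i x (v (t+1)))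
    {T : ℕ} (hT : T ≤ N) :
    ∑ t ∈ Icc 1 T, f t (u (t+1)) (v (t+1))
      ≤ ∑ t ∈ Icc 1 T, f t (u (T+1)) (v (T+1)) + L * ∑ t ∈ Icc 1 T, ‖v t - v (t+1)‖ := by
  induction T with
  | zero => simp
  | succ n ih =>
    have hn1 : 1 ≤ n + 1 := Nat.le_add_left 1 n
    have hleader_min : ∑ t ∈ Icc 1 n, f t (u (n+1)) (v (n+1))
        ≤ ∑ t ∈ Icc 1 n, f t (u (n+1+1)) (v (n+1)) := by
      rcases n.eq_zero_or_pos with rfl | hn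
      · simp
      · exact hmin n hn (by omega) (u (n+1+1))
    have hleader_max := hmax (n+1) hn1 hT (v (n+1))
    have hstep : f (n+1) (u (n+1+1)) (v (n+1+1)) - f (n+1) (u (n+1+1)) (v (n+1))
        ≤ L * ‖v (n+1) - v (n+1+1)‖ := by
      rw [norm_sub_rev]
      exact (le_abs_self _).trans (hLip (n+1) hn1 hT _ _ _)
    simp only [sum_Icc_succ_top hn1] at hleader_max ⊢
    linarith [ih (by omega)]

theorem sum_leader_sub_drift_le_sum_saddle [SeminormedAddCommGroup α] (N : ℕ)
    (f : ℕ → α → β → ℝ) (L : ℝ) (u : ℕ → α) (v : ℕ → β)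
    (hLip : ∀ t, 1 ≤ t → t ≤ N → ∀ x₁ x₂ y, |f t x₁ y - f t x₂ y| ≤ L * ‖x₁ - x₂‖)
    (hmax : ∀ t, 1 ≤ t → t ≤ N → ∀ y,
      ∑ i ∈ Icc 1 t, f i (u (t+1)) y ≤ ∑ i ∈ Icc 1 t, f i (u (t+1)) (v (t+1)))
    (hmin : ∀ t, 1 ≤ t → t ≤ N → ∀ x,
      ∑ i ∈ Icc 1 t, f i (u (t+1)) (v (t+1)) ≤ ∑ i ∈ Icc 1 t, f i x (v (t+1)))
    {T : ℕ} (hT : T ≤ N) :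
    ∑ t ∈ Icc 1 T, f t (u (T+1)) (v (T+1)) - L * ∑ t ∈ Icc 1 T, ‖u t - u (t+1)‖
      ≤ ∑ t ∈ Icc 1 T, f t (u (t+1)) (v (t+1)) := by
  have hswapped := sum_saddle_le_sum_leader_add_drift N (fun t y x => -f t x y) L v u
    (fun t h1 h2 y x₁ x₂ => by simpa only [neg_sub_neg, abs_sub_comm] using hLip t h1 h2 x₁ x₂ y)
    (fun t h1 h2 x => by simpa only [sum_neg_distrib, neg_le_neg_iff] using hmin t h1 h2 x)
    (fun t h1 h2 y => by simpa only [sum_neg_distrib, neg_le_neg_iff] using hmax t h1 h2 y) hT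
  simp only [sum_neg_distrib] at hswapped
  linarith

end BeTheLeader

theorem abs_sub_le_of_lipschitz_in_each_block {α β : Type*} [SeminormedAddCommGroup α]
    [SeminormedAddCommGroup β] (g : α → β → ℝ) (L : ℝ)
    (hLipX : ∀ x₁ x₂ y, |g x₁ y - g x₂ y| ≤ L * ‖x₁ - x₂‖)
    (hLipY : ∀ x y₁ y₂, |g x y₁ - g x y₂| ≤ L * ‖y₁ - y₂‖) (x u : α) (y v : β) :
    |g x y - g u v| ≤ L * ‖v - y‖ + L * ‖u - x‖ := by
  calc |g x y - g u v| ≤ |g x y - g u y| + |g u y - g u v| := abs_sub_le _ _ _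
    _ ≤ L * ‖x - u‖ + L * ‖y - v‖ := add_le_add (hLipX x u y) (hLipY u y v)
    _ = L * ‖v - y‖ + L * ‖u - x‖ := by rw [norm_sub_rev x, norm_sub_rev y, add_comm]

theorem le_of_one_div_natCast_mul_le {t : ℕ} (ht : 1 ≤ t) {a b : ℝ}
    (h : 1 / (t : ℝ) * a ≤ 1 / (t : ℝ) * b) : a ≤ b :=
  (mul_le_mul_iff_right₀ (one_div_pos.mpr (by exact_mod_cast ht))).mp h

theorem stmt2_general {dX dY : ℕ} (T : ℕ)
    (f : ℕ → EuclideanSpace ℝ (Fin dX) → EuclideanSpace ℝ (Fin dY) → ℝ)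
    (L : ℝ)
    (hLipX : ∀ t, 1 ≤ t → t ≤ T → ∀ x₁ x₂ y, |f t x₁ y - f t x₂ y| ≤ L * ‖x₁ - x₂‖)
    (hLipY : ∀ t, 1 ≤ t → t ≤ T → ∀ x y₁ y₂, |f t x y₁ - f t x y₂| ≤ L * ‖y₁ - y₂‖)
    (J : ℕ → EuclideanSpace ℝ (Fin dX) → EuclideanSpace ℝ (Fin dY) → ℝ)
    (hJ : ∀ t x y, J t x y = (1 / (t : ℝ)) * ∑ i ∈ Finset.Icc 1 t, f i x y)
    (u : ℕ → EuclideanSpace ℝ (Fin dX)) (v : ℕ → EuclideanSpace ℝ (Fin dY))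
    (hsaddle : ∀ t, 1 ≤ t → t ≤ T → ∀ x y,
      J t (u (t+1)) y ≤ J t (u (t+1)) (v (t+1)) ∧
      J t (u (t+1)) (v (t+1)) ≤ J t x (v (t+1)))
    (x : ℕ → EuclideanSpace ℝ (Fin dX)) (y : ℕ → EuclideanSpace ℝ (Fin dY)) :
    |∑ t ∈ Finset.Icc 1 T, f t (x (t+1)) (y (t+1))
        - ∑ t ∈ Finset.Icc 1 T, f t (u (T+1)) (v (T+1))|
      ≤ L * ∑ t ∈ Finset.Icc 1 T,
          (‖u t - u (t+1)‖ + ‖v t - v (t+1)‖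
            + ‖v (t+1) - y (t+1)‖ + ‖u (t+1) - x (t+1)‖) := by
  have hmax : ∀ t, 1 ≤ t → t ≤ T → ∀ y', ∑ i ∈ Icc 1 t, f i (u (t+1)) y'
      ≤ ∑ i ∈ Icc 1 t, f i (u (t+1)) (v (t+1)) := fun t h1 h2 y' =>
    le_of_one_div_natCast_mul_le h1 (by simpa only [hJ] using (hsaddle t h1 h2 0 y').1)
  have hmin : ∀ t, 1 ≤ t → t ≤ T → ∀ x', ∑ i ∈ Icc 1 t, f i (u (t+1)) (v (t+1))
      ≤ ∑ i ∈ Icc 1 t, f i x' (v (t+1)) := fun t h1 h2 x' =>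
    le_of_one_div_natCast_mul_le h1 (by simpa only [hJ] using (hsaddle t h1 h2 x' 0).2)
  have hupper := sum_saddle_le_sum_leader_add_drift T f L u v hLipY hmax hmin le_rfl
  have hlower := sum_leader_sub_drift_le_sum_saddle T f L u v hLipX hmax hmin le_rfl
  have hplayed : |∑ t ∈ Icc 1 T, f t (x (t+1)) (y (t+1)) - ∑ t ∈ Icc 1 T, f t (u (t+1)) (v (t+1))|
      ≤ ∑ t ∈ Icc 1 T, (L * ‖v (t+1) - y (t+1)‖ + L * ‖u (t+1) - x (t+1)‖) := by
    rw [← sum_sub_distrib]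
    refine (abs_sum_le_sum_abs _ _).trans (sum_le_sum fun t ht => ?_)
    obtain ⟨h1, h2⟩ := mem_Icc.mp ht
    exact abs_sub_le_of_lipschitz_in_each_block (f t) L (hLipX t h1 h2) (hLipY t h1 h2) _ _ _ _
  have hu : 0 ≤ L * ∑ t ∈ Icc 1 T, ‖u t - u (t+1)‖ := mul_sum _ _ L ▸ sum_nonneg fun t ht =>
    (abs_nonneg _).trans (hLipX t (mem_Icc.mp ht).1 (mem_Icc.mp ht).2 (u t) (u (t+1)) 0)
  have hv : 0 ≤ L * ∑ t ∈ Icc 1 T, ‖v t - v (t+1)‖ := mul_sum _ _ L ▸ sum_nonneg fun t ht =>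
    (abs_nonneg _).trans (hLipY t (mem_Icc.mp ht).1 (mem_Icc.mp ht).2 0 (v t) (v (t+1)))
  simp only [sum_add_distrib, mul_add, ← mul_sum] at hplayed ⊢
  rw [abs_le] at hplayed ⊢
  constructor <;> linarith [hplayed.1, hplayed.2]

/-- be-the-leader lemma: for any sequence of played points,
the comparison with the saddle point `(u (T+1), v (T+1))` of `J T` is controlled
by the drifts of the saddle points and the distance of the iterates to them. -/
theorem stmt2 {dX dY : ℕ} (T : ℕ)
    (f : ℕ → EuclideanSpace ℝ (Fin dX) → EuclideanSpace ℝ (Fin dY) → ℝ)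
    (L : ℝ) (hL : 0 < L)
    (hLipX : ∀ t, 1 ≤ t → t ≤ T → ∀ x₁ x₂ y, |f t x₁ y - f t x₂ y| ≤ L * ‖x₁ - x₂‖)
    (hLipY : ∀ t, 1 ≤ t → t ≤ T → ∀ x y₁ y₂, |f t x y₁ - f t x y₂| ≤ L * ‖y₁ - y₂‖)
    (J : ℕ → EuclideanSpace ℝ (Fin dX) → EuclideanSpace ℝ (Fin dY) → ℝ)
    (hJ : ∀ t x y, J t x y = (1 / (t : ℝ)) * ∑ i ∈ Finset.Icc 1 t, f i x y)
    (u : ℕ → EuclideanSpace ℝ (Fin dX)) (v : ℕ → EuclideanSpace ℝ (Fin dY))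
    (hsaddle : ∀ t, 1 ≤ t → t ≤ T → ∀ x y,
      J t (u (t+1)) y ≤ J t (u (t+1)) (v (t+1)) ∧
      J t (u (t+1)) (v (t+1)) ≤ J t x (v (t+1)))
    (x : ℕ → EuclideanSpace ℝ (Fin dX)) (y : ℕ → EuclideanSpace ℝ (Fin dY)) :
    |∑ t ∈ Finset.Icc 1 T, f t (x (t+1)) (y (t+1))
        - ∑ t ∈ Finset.Icc 1 T, f t (u (T+1)) (v (T+1))|
      ≤ L * ∑ t ∈ Finset.Icc 1 T,
          (‖u t - u (t+1)‖ + ‖v t - v (t+1)‖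
            + ‖v (t+1) - y (t+1)‖ + ‖u (t+1) - x (t+1)‖) :=
  stmt2_general T f L hLipX hLipY J hJ u v hsaddle x y
end

section
/- Let ℋ be a real Hilbert space and X ⊆ ℋ a set of diameter at most D_X. Let g, G ∈ ℋ, Δ = G − g, x ∈ X. Let ŝ ∈ argmin_{u∈X}⟨g, u⟩ and s ∈ argmin_{u∈X}⟨G, u⟩, and define ĝ = −⟨g, ŝ − x⟩ and g̃ = −⟨G, s − x⟩. Then |ĝ − g̃| ≤ D_X·‖Δ‖. -/
open scoped RealInnerProductSpace

/-- the true and estimated Frank-Wolfe gaps differ by at most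
`D_X ‖Δ‖` where `Δ = G − g`. -/
theorem stmt8 {H : Type*} [NormedAddCommGroup H] [InnerProductSpace ℝ H] [CompleteSpace H]
    (X : Set H) (DX : ℝ)
    (hdiam : ∀ u ∈ X, ∀ v ∈ X, ‖u - v‖ ≤ DX)
    (g G shat s x : H) (hx : x ∈ X)
    (hshat : shat ∈ X ∧ ∀ u ∈ X, ⟪g, shat⟫ ≤ ⟪g, u⟫)
    (hs : s ∈ X ∧ ∀ u ∈ X, ⟪G, s⟫ ≤ ⟪G, u⟫) :
    |(-⟪g, shat - x⟫) - (-⟪G, s - x⟫)| ≤ DX * ‖G - g‖ := by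
  obtain ⟨hshatX, hshatmin⟩ := hshat
  obtain ⟨hsX, hsmin⟩ := hs
  have hDX : (0:ℝ) ≤ DX := le_trans (norm_nonneg _) (hdiam x hx x hx)
  have key : ∀ y : H, y ∈ X → ⟪G - g, x - y⟫ ≤ DX * ‖G - g‖ := by
    intro y hy
    calc ⟪G - g, x - y⟫ ≤ ‖G - g‖ * ‖x - y‖ := real_inner_le_norm _ _
    _ ≤ ‖G - g‖ * DX := by
        exact mul_le_mul_of_nonneg_left (hdiam x hx y hy) (norm_nonneg _)
    _ = DX * ‖G - g‖ := mul_comm _ _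
  rw [abs_sub_le_iff]
  constructor
  · -- ĝ - g̃ ≤ ⟪g - G, x - shat⟫
    have h1 : ⟪G, s⟫ ≤ ⟪G, shat⟫ := hsmin shat hshatX
    have h2 : ⟪g - G, x - shat⟫ ≤ DX * ‖G - g‖ := by
      calc ⟪g - G, x - shat⟫ ≤ ‖g - G‖ * ‖x - shat‖ := real_inner_le_norm _ _
      _ = ‖G - g‖ * ‖x - shat‖ := by rw [norm_sub_rev]
      _ ≤ ‖G - g‖ * DX :=
          mul_le_mul_of_nonneg_left (hdiam x hx shat hshatX) (norm_nonneg _)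
      _ = DX * ‖G - g‖ := mul_comm _ _
    simp only [inner_sub_left, inner_sub_right] at h2 ⊢
    linarith
  · have h1 : ⟪g, shat⟫ ≤ ⟪g, s⟫ := hshatmin s hsX
    have h2 := key s hsX
    simp only [inner_sub_left, inner_sub_right] at h2 ⊢
    linarith
end

section
/- Let (w_k)_{k≥0} and (ĝ_k)_{k≥0} be nonnegative reals with w_k ≤ ĝ_k for all k, and suppose w_k ≤ w_{k−1} − C₀γ_k ĝ_{k−1} + γ_k²C₁ + e_k with C₀ ∈ (0, 1], C₁ ≥ 0, e_k ≥ 0, γ_k ∈ (0, 1]. Then w_k ≤ (1 − C₀γ_k/2)w_{k−1} − (C₀γ_k/2)ĝ_{k−1} + γ_k²C₁ + e_k, and with Γ_N = ∏_{k=1}^N (1 − C₀γ_k/2), summing yields (C₀/2)Σ_{k=1}^N (γ_k/Γ_k)ĝ_{k−1} + w_N/Γ_N ≤ w_0 + C₁Σ_{k=1}^N γ_k²/Γ_k + Σ_{k=1}^N e_k/Γ_k. -/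
/-!
Since `w_{k-1} ≤ ĝ_{k-1}`, half of the decrease `C₀ γ_k ĝ_{k-1}` can be spent on contracting
`w_{k-1}` by the factor `ρ_k = 1 - C₀ γ_k / 2`, which is positive because `C₀ γ_k ≤ 1`.
Dividing the resulting recursion by `Γ_k = ρ_1 ⋯ ρ_k` turns `w_k / Γ_k` into a telescoping
sequence.
-/

open Finset

section Telescoping

variable {α : Type*} [Field α] [LinearOrder α] [IsStrictOrderedRing α]

lemma div_mul_add_div_mul_le_of_le_mul_sub_add {w w' b c Γ ρ : α} (hΓ : 0 < Γ) (hρ : 0 < ρ)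
    (h : w' ≤ ρ * w - b + c) :
    b / (Γ * ρ) + w' / (Γ * ρ) ≤ w / Γ + c / (Γ * ρ) := by
  have hw : w / Γ = ρ * w / (Γ * ρ) := by field_simp
  rw [hw, ← add_div, ← add_div]
  exact div_le_div_of_nonneg_right (by linarith) (mul_pos hΓ hρ).le

lemma sum_div_prod_add_div_prod_le {w b c ρ : ℕ → α} (hρ : ∀ k, 0 < ρ k)
    (hrec : ∀ k, w (k + 1) ≤ ρ (k + 1) * w k - b (k + 1) + c (k + 1)) (N : ℕ) :
    ∑ k ∈ Icc 1 N, b k / ∏ j ∈ Icc 1 k, ρ j + w N / ∏ j ∈ Icc 1 N, ρ j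
      ≤ w 0 + ∑ k ∈ Icc 1 N, c k / ∏ j ∈ Icc 1 k, ρ j := by
  induction N with
  | zero => simp
  | succ n ih =>
    have hΓ : 0 < ∏ j ∈ Icc 1 n, ρ j := prod_pos fun j _ => hρ j
    have hstep := div_mul_add_div_mul_le_of_le_mul_sub_add hΓ (hρ (n + 1)) (hrec n)
    simp only [sum_Icc_succ_top (Nat.le_add_left 1 n), prod_Icc_succ_top (Nat.le_add_left 1 n)]
    linarith

end Telescoping

theorem stmt10_general (w g e γ : ℕ → ℝ) (C₀ C₁ : ℝ)
    (hC₀0 : 0 < C₀) (hC₀1 : C₀ ≤ 1)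
    (hγ0 : ∀ k, 0 < γ k) (hγ1 : ∀ k, γ k ≤ 1)
    (hwg : ∀ k, w k ≤ g k)
    (hrec : ∀ k, 1 ≤ k →
      w k ≤ w (k - 1) - C₀ * γ k * g (k - 1) + (γ k) ^ 2 * C₁ + e k) :
    (∀ k, 1 ≤ k →
      w k ≤ (1 - C₀ * γ k / 2) * w (k - 1) - C₀ * γ k / 2 * g (k - 1)
        + (γ k) ^ 2 * C₁ + e k) ∧
    (∀ N : ℕ,
      C₀ / 2 * ∑ k ∈ Finset.Icc 1 N,
          γ k / (∏ j ∈ Finset.Icc 1 k, (1 - C₀ * γ j / 2)) * g (k - 1)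
        + w N / (∏ j ∈ Finset.Icc 1 N, (1 - C₀ * γ j / 2))
      ≤ w 0
        + C₁ * ∑ k ∈ Finset.Icc 1 N,
            (γ k) ^ 2 / (∏ j ∈ Finset.Icc 1 k, (1 - C₀ * γ j / 2))
        + ∑ k ∈ Finset.Icc 1 N,
            e k / (∏ j ∈ Finset.Icc 1 k, (1 - C₀ * γ j / 2))) := by
  have hcontract : ∀ k, 1 ≤ k →
      w k ≤ (1 - C₀ * γ k / 2) * w (k - 1) - C₀ * γ k / 2 * g (k - 1)
        + (γ k) ^ 2 * C₁ + e k := fun k hk => by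
    have hhalf : 0 ≤ C₀ * γ k / 2 := by have := hγ0 k; positivity
    nlinarith [hrec k hk, mul_le_mul_of_nonneg_left (hwg (k - 1)) hhalf]
  have hρ : ∀ j, 0 < 1 - C₀ * γ j / 2 := fun j => by
    nlinarith [mul_le_mul hC₀1 (hγ1 j) (hγ0 j).le zero_le_one]
  refine ⟨hcontract, fun N => ?_⟩
  have key := sum_div_prod_add_div_prod_le (w := w) (b := fun k => C₀ / 2 * γ k * g (k - 1))
    (c := fun k => γ k ^ 2 * C₁ + e k) hρ (fun k => by
      have := hcontract (k + 1) (by omega)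
      simp only [Nat.add_sub_cancel] at this ⊢
      linarith) N
  have hb : C₀ / 2 * ∑ k ∈ Icc 1 N, γ k / (∏ j ∈ Icc 1 k, (1 - C₀ * γ j / 2)) * g (k - 1)
      = ∑ k ∈ Icc 1 N, C₀ / 2 * γ k * g (k - 1) / ∏ j ∈ Icc 1 k, (1 - C₀ * γ j / 2) := by
    rw [mul_sum]; exact sum_congr rfl fun k _ => by ring
  have hc : C₁ * ∑ k ∈ Icc 1 N, γ k ^ 2 / (∏ j ∈ Icc 1 k, (1 - C₀ * γ j / 2))
        + ∑ k ∈ Icc 1 N, e k / (∏ j ∈ Icc 1 k, (1 - C₀ * γ j / 2))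
      = ∑ k ∈ Icc 1 N, (γ k ^ 2 * C₁ + e k) / ∏ j ∈ Icc 1 k, (1 - C₀ * γ j / 2) := by
    rw [mul_sum, ← sum_add_distrib]; exact sum_congr rfl fun k _ => by ring
  linarith

/-- the telescoping argument for stochastic saddle-point Frank-Wolfe with
non-adaptive stepsizes, with `Γ k = ∏_{j=1}^k (1 − C₀ γ_j / 2)`. -/
theorem stmt10 (w g e γ : ℕ → ℝ) (C₀ C₁ : ℝ)
    (hC₀0 : 0 < C₀) (hC₀1 : C₀ ≤ 1) (hC₁ : 0 ≤ C₁)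
    (hw : ∀ k, 0 ≤ w k) (hg : ∀ k, 0 ≤ g k) (he : ∀ k, 0 ≤ e k)
    (hγ0 : ∀ k, 0 < γ k) (hγ1 : ∀ k, γ k ≤ 1)
    (hwg : ∀ k, w k ≤ g k)
    (hrec : ∀ k, 1 ≤ k →
      w k ≤ w (k - 1) - C₀ * γ k * g (k - 1) + (γ k) ^ 2 * C₁ + e k) :
    (∀ k, 1 ≤ k →
      w k ≤ (1 - C₀ * γ k / 2) * w (k - 1) - C₀ * γ k / 2 * g (k - 1)
        + (γ k) ^ 2 * C₁ + e k) ∧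
    (∀ N : ℕ,
      C₀ / 2 * ∑ k ∈ Finset.Icc 1 N,
          γ k / (∏ j ∈ Finset.Icc 1 k, (1 - C₀ * γ j / 2)) * g (k - 1)
        + w N / (∏ j ∈ Finset.Icc 1 N, (1 - C₀ * γ j / 2))
      ≤ w 0
        + C₁ * ∑ k ∈ Finset.Icc 1 N,
            (γ k) ^ 2 / (∏ j ∈ Finset.Icc 1 k, (1 - C₀ * γ j / 2))
        + ∑ k ∈ Finset.Icc 1 N,
            e k / (∏ j ∈ Finset.Icc 1 k, (1 - C₀ * γ j / 2))) :=
  stmt10_general w g e γ C₀ C₁ hC₀0 hC₀1 hγ0 hγ1 hwg hrec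
end
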